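/- arXiv:2302.01135 — 2 statements merged into one kernel-verified Lean document; each statement's English description precedes it below -/
import Mathlib

section
/- Let f : [T₀, T₁] → ℝ be L-Lipschitz with f(t) > 0 for all t, and let P : (0,∞) → ℝ be nonnegative and monotonically decreasing. If there exists t* ∈ (T₀, T₁) and ε > 0 with [t* - ε, t* + ε] ⊆ [T₀, T₁] and f(t*) ≤ ε, then ∫_{T₀}^{T₁} P(f(t)) dt ≥ ε · P(ε + L·ε). -/
/-!
On `[t*, t* + ε]` the Lipschitz bound gives `f t ≤ f t* + L ε ≤ ε + L ε`, so the antitone `P`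
satisfies `P (f t) ≥ P (ε + L ε)` there; elsewhere the integrand is nonnegative. The integrand is
integrable because `f` is continuous and positive on a compact interval, hence ranges in some
`[c, M] ⊆ (0, ∞)`, where `P` is bounded by monotonicity.
-/

open Set MeasureTheory

theorem IsCompact.integrableOn_comp_of_antitoneOn {μ : Measure ℝ} [IsFiniteMeasureOnCompacts μ]
    {s : Set ℝ} {f P : ℝ → ℝ} (hs : IsCompact s) (hf : ContinuousOn f s)
    (hpos : ∀ t ∈ s, 0 < f t) (hP : AntitoneOn P (Ioi 0)) :
    IntegrableOn (fun t => P (f t)) s μ := by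
  rcases s.eq_empty_or_nonempty with rfl | hne
  · exact integrableOn_empty
  obtain ⟨tmin, htmin, hmin⟩ := hs.exists_isMinOn hne hf
  obtain ⟨tmax, htmax, hmax⟩ := hs.exists_isMaxOn hne hf
  have hc : 0 < f tmin := hpos tmin htmin
  -- `P` need not be measurable, but on `s` it is only evaluated where it agrees with the
  -- antitone function `x ↦ P (max x (f tmin))` on all of `ℝ`
  have hQ : Antitone fun x => P (max x (f tmin)) := fun x y hxy =>
    hP (hc.trans_le (le_max_right _ _)) (hc.trans_le (le_max_right _ _)) (max_le_max_right _ hxy)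
  have hmeas : AEStronglyMeasurable (fun t => P (f t)) (μ.restrict s) := by
    refine (hQ.measurable.comp_aemeasurable
      (hf.aemeasurable hs.measurableSet)).aestronglyMeasurable.congr ?_
    filter_upwards [ae_restrict_mem hs.measurableSet] with t ht
    simp only [Function.comp_apply, max_eq_left (show f tmin ≤ f t from hmin ht)]
  refine (integrableOn_const (C := max |P (f tmax)| |P (f tmin)|)
    hs.measure_lt_top.ne).mono' hmeas ?_
  filter_upwards [ae_restrict_mem hs.measurableSet] with t ht
  exact abs_le_max_abs_abs (hP (hpos t ht) (hpos tmax htmax) (hmax ht))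
    (hP hc (hpos t ht) (hmin ht))

theorem mul_le_intervalIntegral_of_le_on_subinterval {f : ℝ → ℝ} {a b c d m : ℝ}
    (hca : c ≤ a) (hab : a ≤ b) (hbd : b ≤ d) (hf : IntervalIntegrable f volume c d)
    (hnonneg : ∀ t ∈ Icc c d, 0 ≤ f t) (hm : ∀ t ∈ Icc a b, m ≤ f t) :
    (b - a) * m ≤ ∫ t in c..d, f t := by
  calc (b - a) * m = ∫ _ in a..b, m := by simp
    _ ≤ ∫ t in a..b, f t :=
      intervalIntegral.integral_mono_on hab intervalIntegrable_const
        (hf.mono_set (by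
          rw [uIcc_of_le hab, uIcc_of_le (hca.trans (hab.trans hbd))]
          exact Icc_subset_Icc hca hbd)) hm
    _ ≤ ∫ t in c..d, f t := intervalIntegral.integral_mono_interval hca hab hbd
        (ae_restrict_of_forall_mem measurableSet_Ioc fun t ht =>
          hnonneg t (Ioc_subset_Icc_self ht)) hf

theorem stmt_6_general (T₀ T₁ L ε : ℝ) (f P : ℝ → ℝ)
    (hL : 0 ≤ L)
    (hLip : ∀ s ∈ Set.Icc T₀ T₁, ∀ t ∈ Set.Icc T₀ T₁, |f s - f t| ≤ L * |s - t|)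
    (hfpos : ∀ t ∈ Set.Icc T₀ T₁, 0 < f t)
    (hPnonneg : ∀ x : ℝ, 0 < x → 0 ≤ P x)
    (hPanti : ∀ x y : ℝ, 0 < x → x ≤ y → P y ≤ P x)
    (hε : 0 < ε) (tstar : ℝ)
    (hsub : Set.Icc (tstar - ε) (tstar + ε) ⊆ Set.Icc T₀ T₁)
    (hclose : f tstar ≤ ε) :
    ε * P (ε + L * ε) ≤ ∫ t in T₀..T₁, P (f t) := by
  have hmid : tstar ∈ Icc T₀ T₁ := hsub ⟨by linarith, by linarith⟩
  have hright : tstar + ε ∈ Icc T₀ T₁ := hsub ⟨by linarith, le_rfl⟩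
  have hcont : ContinuousOn f (Icc T₀ T₁) :=
    (LipschitzOnWith.of_dist_le' (K := L) fun s hs t ht => by
      simpa only [Real.dist_eq] using hLip s hs t ht).continuousOn
  have hint : IntervalIntegrable (fun t => P (f t)) volume T₀ T₁ :=
    (intervalIntegrable_iff_integrableOn_Icc_of_le (hmid.1.trans hmid.2)).2 <|
      isCompact_Icc.integrableOn_comp_of_antitoneOn hcont hfpos
        fun x hx y _ hxy => hPanti x y hx hxy
  have hnear : ∀ t ∈ Icc tstar (tstar + ε), P (ε + L * ε) ≤ P (f t) := by
    intro t ht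
    have htI : t ∈ Icc T₀ T₁ := hsub ⟨by linarith [ht.1], ht.2⟩
    have hdist : |t - tstar| ≤ ε := abs_le.2 ⟨by linarith [ht.1], by linarith [ht.2]⟩
    refine hPanti _ _ (hfpos t htI) ?_
    calc f t ≤ f tstar + L * |t - tstar| := by linarith [(abs_le.1 (hLip t htI tstar hmid)).2]
      _ ≤ ε + L * ε := by gcongr
  simpa using mul_le_intervalIntegral_of_le_on_subinterval hmid.1 (by linarith) hright.2 hint
    (fun t ht => hPnonneg _ (hfpos t ht)) hnear

/-- If the clearance `f` is `L`-Lipschitz and positive on `[T₀,T₁]`, `P` is a nonnegative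
antitone barrier on `(0,∞)`, and there is `t* ∈ (T₀,T₁)` with `[t*-ε, t*+ε] ⊆ [T₀,T₁]`
and `f(t*) ≤ ε`, then `∫_{T₀}^{T₁} P(f(t)) dt ≥ ε · P(ε + Lε)`. -/
theorem stmt_6 (T₀ T₁ L ε : ℝ) (f P : ℝ → ℝ)
    (hL : 0 ≤ L)
    (hLip : ∀ s ∈ Set.Icc T₀ T₁, ∀ t ∈ Set.Icc T₀ T₁, |f s - f t| ≤ L * |s - t|)
    (hfpos : ∀ t ∈ Set.Icc T₀ T₁, 0 < f t)
    (hPnonneg : ∀ x : ℝ, 0 < x → 0 ≤ P x)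
    (hPanti : ∀ x y : ℝ, 0 < x → x ≤ y → P y ≤ P x)
    (hε : 0 < ε) (tstar : ℝ) (htstar : tstar ∈ Set.Ioo T₀ T₁)
    (hsub : Set.Icc (tstar - ε) (tstar + ε) ⊆ Set.Icc T₀ T₁)
    (hclose : f tstar ≤ ε) :
    ε * P (ε + L * ε) ≤ ∫ t in T₀..T₁, P (f t) :=
  stmt_6_general T₀ T₁ L ε f P hL hLip hfpos hPnonneg hPanti hε tstar hsub hclose
end

section
/- Let f : [T₀,T₁] → ℝ be L₁-Lipschitz and let P : (0,∞) → ℝ be differentiable with |P'| monotonically decreasing (i.e., |P'(x)| ≥ |P'(y)| for x ≤ y). Suppose the midpoint value m = f((T₀+T₁)/2) satisfies m ≥ δ + L₁(T₁-T₀)/2 for some δ > 0, and f(t) ≥ δ for all t. Then |∫_{T₀}^{T₁} P(f(t)) dt - (T₁-T₀)·P(m)| ≤ L₁·|P'(δ)|·(T₁-T₀)²/4. -/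
lemma int_abs_mid (a b : ℝ) (h : a ≤ b) :
    (∫ t in a..b, |t - (a + b) / 2|) = (b - a) ^ 2 / 4 := by
  set c := (a + b) / 2 with hc
  have hac : a ≤ c := by rw [hc]; linarith
  have hcb : c ≤ b := by rw [hc]; linarith
  have h1 : (∫ t in a..c, |t - c|) = ∫ t in a..c, (c - t) := by
    apply intervalIntegral.integral_congr
    intro t ht
    rw [Set.uIcc_of_le hac] at ht
    have h2 := ht.2
    show |t - c| = c - t
    rw [abs_of_nonpos (by linarith)]; ring
  have h2 : (∫ t in c..b, |t - c|) = ∫ t in c..b, (t - c) := by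
    apply intervalIntegral.integral_congr
    intro t ht
    rw [Set.uIcc_of_le hcb] at ht
    have h1 := ht.1
    show |t - c| = t - c
    rw [abs_of_nonneg (by linarith)]
  have hsplit : (∫ t in a..b, |t - c|) = (∫ t in a..c, |t - c|) + ∫ t in c..b, |t - c| := by
    rw [intervalIntegral.integral_add_adjacent_intervals]
    · exact ((continuous_id.sub continuous_const).abs).intervalIntegrable a c
    · exact ((continuous_id.sub continuous_const).abs).intervalIntegrable c b
  rw [hsplit, h1, h2]
  have e1 : (∫ t in a..c, (c - t)) = c * (c - a) - (c ^ 2 - a ^ 2) / 2 := by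
    rw [intervalIntegral.integral_sub (intervalIntegrable_const)
      (intervalIntegral.intervalIntegrable_id)]
    simp [integral_id]
    ring
  have e2 : (∫ t in c..b, (t - c)) = (b ^ 2 - c ^ 2) / 2 - c * (b - c) := by
    rw [intervalIntegral.integral_sub (intervalIntegral.intervalIntegrable_id)
      (intervalIntegrable_const)]
    simp [integral_id]
    ring
  rw [e1, e2, hc]; ring

/-- Riemann-sum error of the midpoint penalty surrogate: if `f` is `L₁`-Lipschitz,
`P` differentiable on `(0,∞)` with `|P'|` antitone, the midpoint clearance
`m = f((T₀+T₁)/2)` satisfies `m ≥ δ + L₁(T₁-T₀)/2` with `δ > 0` and `f ≥ δ` throughout,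
then `|∫ P(f) - (T₁-T₀) P(m)| ≤ L₁ |P'(δ)| (T₁-T₀)²/4`. -/
theorem stmt_10 (T₀ T₁ L₁ δ : ℝ) (f P : ℝ → ℝ)
    (hT : T₀ ≤ T₁) (hL : 0 ≤ L₁) (hδ : 0 < δ)
    (hLip : ∀ s ∈ Set.Icc T₀ T₁, ∀ t ∈ Set.Icc T₀ T₁, |f s - f t| ≤ L₁ * |s - t|)
    (hPdiff : ∀ x : ℝ, 0 < x → DifferentiableAt ℝ P x)
    (hP'anti : ∀ x y : ℝ, 0 < x → x ≤ y → |deriv P y| ≤ |deriv P x|)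
    (hmid : f ((T₀ + T₁) / 2) ≥ δ + L₁ * (T₁ - T₀) / 2)
    (hfδ : ∀ t ∈ Set.Icc T₀ T₁, δ ≤ f t) :
    |(∫ t in T₀..T₁, P (f t)) - (T₁ - T₀) * P (f ((T₀ + T₁) / 2))| ≤
      L₁ * |deriv P δ| * (T₁ - T₀) ^ 2 / 4 := by
  set c := (T₀ + T₁) / 2 with hc
  set m := f c with hm
  have hcI : c ∈ Set.Icc T₀ T₁ := ⟨by rw [hc]; linarith, by rw [hc]; linarith⟩
  -- P is |P'(δ)|-Lipschitz on [δ, ∞)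
  have lipP : ∀ a ∈ Set.Ici δ, ∀ b ∈ Set.Ici δ, |P b - P a| ≤ |deriv P δ| * |b - a| := by
    intro a ha b hb
    have := Convex.norm_image_sub_le_of_norm_deriv_le (f := P)
      (fun x hx => hPdiff x (lt_of_lt_of_le hδ hx))
      (fun x hx => by simpa [Real.norm_eq_abs] using hP'anti δ x hδ hx)
      (convex_Ici δ) ha hb
    simpa [Real.norm_eq_abs] using this
  have key : ∀ t ∈ Set.Icc T₀ T₁,
      |P (f t) - P m| ≤ (L₁ * |deriv P δ|) * |t - c| := by
    intro t ht
    have h1 : |P (f t) - P m| ≤ |deriv P δ| * |f t - m| :=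
      lipP m (hfδ c hcI) (f t) (hfδ t ht)
    have h2 : |f t - m| ≤ L₁ * |t - c| := hLip t ht c hcI
    calc |P (f t) - P m| ≤ |deriv P δ| * |f t - m| := h1
      _ ≤ |deriv P δ| * (L₁ * |t - c|) :=
        mul_le_mul_of_nonneg_left h2 (abs_nonneg _)
      _ = (L₁ * |deriv P δ|) * |t - c| := by ring
  -- continuity of f on Icc
  have hfc : ContinuousOn f (Set.Icc T₀ T₁) := by
    have : LipschitzOnWith (Real.toNNReal L₁) f (Set.Icc T₀ T₁) := by
      apply LipschitzOnWith.of_dist_le'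
      intro s hs t ht
      simpa [Real.dist_eq] using hLip s hs t ht
    exact this.continuousOn
  have hPc : ContinuousOn P (Set.Ioi 0) := fun x hx =>
    ((hPdiff x hx).continuousAt).continuousWithinAt
  have hPfc : ContinuousOn (fun t => P (f t)) (Set.Icc T₀ T₁) := by
    apply hPc.comp hfc
    intro t ht
    exact lt_of_lt_of_le hδ (hfδ t ht)
  have hInt : IntervalIntegrable (fun t => P (f t)) MeasureTheory.volume T₀ T₁ := by
    apply ContinuousOn.intervalIntegrable
    rw [Set.uIcc_of_le hT]
    exact hPfc
  have hIntC : IntervalIntegrable (fun _ : ℝ => P m) MeasureTheory.volume T₀ T₁ :=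
    intervalIntegrable_const
  have hIntAbs : IntervalIntegrable (fun t => (L₁ * |deriv P δ|) * |t - c|)
      MeasureTheory.volume T₀ T₁ :=
    (continuous_const.mul ((continuous_id.sub continuous_const).abs)).intervalIntegrable T₀ T₁
  have hrw : (∫ t in T₀..T₁, P (f t)) - (T₁ - T₀) * P m
      = ∫ t in T₀..T₁, (P (f t) - P m) := by
    rw [intervalIntegral.integral_sub hInt hIntC, intervalIntegral.integral_const,
      smul_eq_mul]
  rw [hrw]
  calc |∫ t in T₀..T₁, (P (f t) - P m)|
      ≤ ∫ t in T₀..T₁, |P (f t) - P m| := by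
        simpa [Real.norm_eq_abs] using
          intervalIntegral.norm_integral_le_integral_norm (f := fun t => P (f t) - P m) hT
    _ ≤ ∫ t in T₀..T₁, (L₁ * |deriv P δ|) * |t - c| := by
        apply intervalIntegral.integral_mono_on hT (hInt.sub hIntC).abs hIntAbs
        intro t ht
        exact key t ht
    _ = (L₁ * |deriv P δ|) * ∫ t in T₀..T₁, |t - c| := by
        rw [intervalIntegral.integral_const_mul]
    _ = (L₁ * |deriv P δ|) * ((T₁ - T₀) ^ 2 / 4) := by
        rw [hc, int_abs_mid T₀ T₁ hT]
    _ = L₁ * |deriv P δ| * (T₁ - T₀) ^ 2 / 4 := by ring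
end
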